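/- arXiv:2509.26605 — 3 statements merged into one kernel-verified Lean document; each statement's English description precedes it below -/
import Mathlib

section
/- Let V₀ = λI_d and V_{t+1} = V_t + x_t x_t^T with ‖x_t‖₂² ≤ c for all t ∈ [T]. Then Σ_{t=1}^{T} log(1 + ‖x_t‖²_{V_t^{-1}}) ≤ d·log(1 + cT/(dλ)). -/
open Finset Matrix

/-- **elliptical potential lemma.** Let `V₀ = λ I_d` and
`V_{t+1} = V_t + x_t x_tᵀ` with `‖x_t‖₂² ≤ c` for all `t < T`. Then
`Σ_{t<T} log(1 + ‖x_t‖²_{V_t⁻¹}) ≤ d · log(1 + cT/(dλ))`. -/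
theorem elliptical_potential_log_sum_bound
    (d T : ℕ) (lam c : ℝ) (hlam : 0 < lam)
    (x : ℕ → Fin d → ℝ) (V : ℕ → Matrix (Fin d) (Fin d) ℝ)
    (hV0 : V 0 = lam • (1 : Matrix (Fin d) (Fin d) ℝ))
    (hVs : ∀ t, V (t + 1) = V t + Matrix.vecMulVec (x t) (x t))
    (hx : ∀ t, t < T → ∑ i, (x t i) ^ 2 ≤ c) :
    ∑ t ∈ Finset.range T, Real.log (1 + x t ⬝ᵥ ((V t)⁻¹ *ᵥ x t))
      ≤ d * Real.log (1 + c * T / (d * lam)) := by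
  rcases Nat.eq_zero_or_pos d with hd | hd
  · subst hd
    simp [dotProduct]
  rcases Nat.eq_zero_or_pos T with hT | hT
  · subst hT
    simp
  have hc : 0 ≤ c := le_trans (Finset.sum_nonneg fun i _ => sq_nonneg _) (hx 0 hT)
  have hd0 : (0:ℝ) < d := by exact_mod_cast hd
  -- positive definiteness
  have hPD : ∀ t, (V t).PosDef := by
    intro t
    induction t with
    | zero =>
      rw [hV0, Matrix.smul_one_eq_diagonal]
      exact Matrix.posDef_diagonal_iff.2 fun _ => hlam
    | succ t ih =>
      rw [hVs]
      refine ih.add_posSemidef ?_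
      have h := Matrix.posSemidef_conjTranspose_mul_self (Matrix.replicateRow Unit (x t))
      have heq : (Matrix.replicateRow Unit (x t))ᴴ * Matrix.replicateRow Unit (x t)
          = Matrix.vecMulVec (x t) (x t) := by
        rw [Matrix.vecMulVec_eq Unit, Matrix.conjTranspose_replicateRow, star_trivial]
      rwa [heq] at h
  have hdetpos : ∀ t, 0 < (V t).det := fun t => (hPD t).det_pos
  -- quadratic forms are nonnegative
  have hquad : ∀ t, 0 ≤ x t ⬝ᵥ ((V t)⁻¹ *ᵥ x t) := by
    intro t
    have h := (hPD t).inv.posSemidef.dotProduct_mulVec_nonneg (x t)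
    simpa using h
  -- matrix determinant lemma
  have hdet : ∀ t, (V (t+1)).det = (V t).det * (1 + x t ⬝ᵥ ((V t)⁻¹ *ᵥ x t)) := by
    intro t
    rw [hVs, Matrix.vecMulVec_eq Unit,
      Matrix.det_add_replicateCol_mul_replicateRow (hPD t).det_pos.ne'.isUnit]
    congr 1
    rw [Matrix.det_unique, Matrix.mul_assoc, ← Matrix.replicateCol_mulVec]
    simp [Matrix.add_apply, Matrix.one_apply_eq]
  -- telescoping
  have hsum : ∑ t ∈ Finset.range T, Real.log (1 + x t ⬝ᵥ ((V t)⁻¹ *ᵥ x t))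
      = Real.log (V T).det - Real.log (V 0).det := by
    rw [← Finset.sum_range_sub (fun t => Real.log (V t).det)]
    refine Finset.sum_congr rfl fun t _ => ?_
    rw [hdet t, Real.log_mul (hdetpos t).ne' (by have := hquad t; intro h; linarith)]
    ring
  -- trace bound
  have htr : ∀ t, t ≤ T → (V t).trace ≤ d * lam + c * t := by
    intro t ht
    induction t with
    | zero =>
      simp [hV0, Matrix.trace_smul, Matrix.trace_one, mul_comm]
    | succ t ih =>
      have ih' := ih (le_of_lt (Nat.lt_of_succ_le ht))
      have hxt : (Matrix.vecMulVec (x t) (x t)).trace ≤ c := by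
        rw [Matrix.vecMulVec_eq Unit, Matrix.trace_replicateCol_mul_replicateRow]
        have : x t ⬝ᵥ x t = ∑ i, (x t i)^2 := by
          simp [dotProduct, sq]
        rw [this]
        exact hx t (Nat.lt_of_succ_le ht)
      rw [hVs, Matrix.trace_add]
      push_cast
      nlinarith
  -- eigenvalues
  have hH := (hPD T).isHermitian
  have htrace_eq : (V T).trace = ∑ i, hH.eigenvalues i := by
    conv_lhs => rw [hH.spectral_theorem]
    rw [Unitary.conjStarAlgAut_apply, Matrix.trace_mul_cycle, Unitary.coe_star_mul_self, Matrix.one_mul,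
      Matrix.trace_diagonal]
    simp
  have heig_nonneg : ∀ i, (0:ℝ) ≤ hH.eigenvalues i :=
    fun i => le_of_lt ((hPD T).eigenvalues_pos i)
  have hdet_eq : (V T).det = ∏ i, hH.eigenvalues i := by
    simpa using hH.det_eq_prod_eigenvalues
  -- AM-GM
  have hamgm : (V T).det ≤ ((V T).trace / d) ^ d := by
    have h := Real.geom_mean_le_arith_mean_weighted Finset.univ
      (fun _ => (d:ℝ)⁻¹) (fun i => hH.eigenvalues i)
      (fun _ _ => by positivity)
      (by simp [Finset.card_univ]; field_simp)
      (fun i _ => heig_nonneg i)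
    have hprod : ∏ i, (hH.eigenvalues i) ^ ((d:ℝ)⁻¹)
        = ((V T).det) ^ ((d:ℝ)⁻¹) := by
      rw [Real.finset_prod_rpow _ _ (fun i _ => heig_nonneg i), hdet_eq]
    have hsum' : ∑ i : Fin d, (d:ℝ)⁻¹ * hH.eigenvalues i = (V T).trace / d := by
      rw [← Finset.mul_sum, ← htrace_eq]
      ring
    rw [hprod, hsum'] at h
    calc (V T).det = (((V T).det) ^ ((d:ℝ)⁻¹)) ^ d :=
          (Real.rpow_inv_natCast_pow (hdetpos T).le hd.ne').symm
      _ ≤ ((V T).trace / d) ^ d := by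
          apply pow_le_pow_left₀ (Real.rpow_nonneg (hdetpos T).le _) h
  -- combine
  set r : ℝ := 1 + c * T / (d * lam) with hr
  have hr1 : (1:ℝ) ≤ r := by
    have h0 : 0 ≤ c * T / (d * lam) := by positivity
    rw [hr]; linarith
  have hrpos : 0 < r := lt_of_lt_of_le one_pos hr1
  have hlamr : (V T).trace / d ≤ lam * r := by
    have h1 : lam * r = lam + c * T / d := by
      rw [hr]; field_simp
    rw [h1, div_le_iff₀ hd0]
    have := htr T le_rfl
    calc (V T).trace ≤ d * lam + c * T := this
      _ = (lam + c * T / d) * d := by field_simp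
  have hbound : (V T).det ≤ (lam * r) ^ d := by
    refine le_trans hamgm (pow_le_pow_left₀ ?_ hlamr d)
    have : 0 < (V T).trace := by
      rw [htrace_eq]
      exact Finset.sum_pos (fun i _ => (hPD T).eigenvalues_pos i) ⟨⟨0, hd⟩, Finset.mem_univ _⟩
    positivity
  have hdet0 : (V 0).det = lam ^ d := by
    rw [hV0, Matrix.det_smul, Matrix.det_one, mul_one]
    simp
  rw [hsum, hdet0, Real.log_pow]
  have hlog : Real.log (V T).det ≤ d * (Real.log lam + Real.log r) := by
    calc Real.log (V T).det ≤ Real.log ((lam * r) ^ d) :=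
          Real.log_le_log (hdetpos T) hbound
      _ = d * Real.log (lam * r) := by rw [Real.log_pow]
      _ = d * (Real.log lam + Real.log r) := by
          rw [Real.log_mul hlam.ne' hrpos.ne']
  nlinarith [hlog]
end

section
/- Let V₀ = λI_d and V_{t+1} = V_t + x_t x_t^T with ‖x_t‖₂² ≤ c. If additionally ‖x_t‖²_{V_t^{-1}} ≤ 1 for all t (which holds when c ≤ λ), then Σ_{t=1}^{T} ‖x_t‖²_{V_t^{-1}} ≤ 2d·log(1 + cT/(dλ)). -/
open Finset Matrix

lemma ep_aux_log {u : ℝ} (h0 : 0 ≤ u) (h1 : u ≤ 1) : u ≤ 2 * Real.log (1 + u) := by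
  have hpos : (0:ℝ) < 1 + u := by linarith
  have h := Real.one_sub_inv_le_log_of_pos hpos
  have hmul : (1 + u)⁻¹ * (1 + u) = 1 := inv_mul_cancel₀ (ne_of_gt hpos)
  nlinarith [inv_nonneg.mpr hpos.le]

lemma ep_vecMulVec_psd {d : ℕ} (x : Fin d → ℝ) : (Matrix.vecMulVec x x).PosSemidef := by
  rw [Matrix.vecMulVec_eq Unit]
  have : Matrix.replicateCol Unit x = (Matrix.replicateRow Unit x)ᴴ := by
    ext i j; simp [Matrix.replicateCol, Matrix.replicateRow]
  rw [this]
  exact Matrix.posSemidef_conjTranspose_mul_self _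

lemma ep_det_step {d : ℕ} (A : Matrix (Fin d) (Fin d) ℝ) (hA : A.PosDef) (x : Fin d → ℝ) :
    (A + Matrix.vecMulVec x x).det = A.det * (1 + x ⬝ᵥ (A⁻¹ *ᵥ x)) := by
  have hsymm : ∀ i j, A⁻¹ i j = A⁻¹ j i := fun i j => by
    simpa using (hA.inv.isHermitian.apply i j).symm
  rw [Matrix.vecMulVec_eq Unit,
    Matrix.det_add_replicateCol_mul_replicateRow (isUnit_iff_ne_zero.mpr hA.det_pos.ne')]
  congr 1
  rw [Matrix.det_unique]
  simp only [Matrix.add_apply, Matrix.one_apply_eq, Matrix.mul_apply, Matrix.replicateRow, Matrix.replicateCol,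
    dotProduct, Matrix.mulVec, Matrix.of_apply, Finset.sum_mul, Finset.mul_sum]
  congr 1
  refine Finset.sum_congr rfl fun j _ => ?_
  refine Finset.sum_congr rfl fun i _ => ?_
  rw [hsymm i j]; ring

lemma ep_trace_eq_sum_eigenvalues {d : ℕ} (A : Matrix (Fin d) (Fin d) ℝ)
    (hA : A.IsHermitian) : A.trace = ∑ i, hA.eigenvalues i := by
  nth_rewrite 1 [hA.spectral_theorem]
  rw [Unitary.conjStarAlgAut_apply, Matrix.trace_mul_cycle, (Matrix.mem_unitaryGroup_iff').mp (hA.eigenvectorUnitary).2,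
    one_mul, Matrix.trace_diagonal]
  simp

lemma ep_det_le_pow {d : ℕ} (hd : 0 < d) (A : Matrix (Fin d) (Fin d) ℝ) (hA : A.PosDef) :
    A.det ≤ (A.trace / d) ^ d := by
  have hH := hA.isHermitian
  have hpos : ∀ i, 0 < hH.eigenvalues i := hA.eigenvalues_pos
  have hdet : A.det = ∏ i, hH.eigenvalues i := by
    simpa using hH.det_eq_prod_eigenvalues
  have htr : A.trace = ∑ i, hH.eigenvalues i := ep_trace_eq_sum_eigenvalues A hH
  have hgm := Real.geom_mean_le_arith_mean_weighted Finset.univ (fun _ => (1:ℝ)/d)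
    hH.eigenvalues (fun i _ => by positivity)
    (by simp [Finset.card_univ]; field_simp) (fun i _ => (hpos i).le)
  have key : A.det = (∏ i, hH.eigenvalues i ^ ((1:ℝ)/d)) ^ d := by
    rw [← Finset.prod_pow, hdet]
    refine Finset.prod_congr rfl fun i _ => ?_
    rw [← Real.rpow_natCast (hH.eigenvalues i ^ ((1:ℝ)/d)) d, ← Real.rpow_mul (hpos i).le,
      one_div, inv_mul_cancel₀ (by exact_mod_cast hd.ne')]
    simp
  rw [key]
  refine pow_le_pow_left₀ (Finset.prod_nonneg fun i _ => Real.rpow_nonneg (hpos i).le _) ?_ d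
  calc ∏ i, hH.eigenvalues i ^ ((1:ℝ)/d) ≤ ∑ i, (1:ℝ)/d * hH.eigenvalues i := hgm
    _ = A.trace / d := by
        rw [htr, Finset.sum_div]
        exact Finset.sum_congr rfl fun i _ => by ring

/-- Let `V₀ = λ I_d` and `V_{t+1} = V_t + x_t x_tᵀ` with
`‖x_t‖₂² ≤ c`. If additionally `‖x_t‖²_{V_t⁻¹} ≤ 1` for all `t < T` (which holds when
`c ≤ λ`), then `Σ_{t<T} ‖x_t‖²_{V_t⁻¹} ≤ 2 d · log(1 + cT/(dλ))`. -/
theorem elliptical_potential_sum_bound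
    (d T : ℕ) (lam c : ℝ) (hlam : 0 < lam)
    (x : ℕ → Fin d → ℝ) (V : ℕ → Matrix (Fin d) (Fin d) ℝ)
    (hV0 : V 0 = lam • (1 : Matrix (Fin d) (Fin d) ℝ))
    (hVs : ∀ t, V (t + 1) = V t + Matrix.vecMulVec (x t) (x t))
    (hx : ∀ t, t < T → ∑ i, (x t i) ^ 2 ≤ c)
    (hmah : ∀ t, t < T → x t ⬝ᵥ ((V t)⁻¹ *ᵥ x t) ≤ 1) :
    ∑ t ∈ Finset.range T, x t ⬝ᵥ ((V t)⁻¹ *ᵥ x t)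
      ≤ 2 * d * Real.log (1 + c * T / (d * lam)) := by
  by_cases hd : d = 0
  · subst hd
    simp [dotProduct]
  have hd' : 0 < d := Nat.pos_of_ne_zero hd
  have hdR : (0:ℝ) < d := by exact_mod_cast hd'
  set u : ℕ → ℝ := fun t => x t ⬝ᵥ ((V t)⁻¹ *ᵥ x t) with hu
  have hPD : ∀ t, (V t).PosDef := by
    intro t
    induction t with
    | zero =>
        rw [hV0, Matrix.smul_one_eq_diagonal]
        exact (Matrix.posDef_diagonal_iff).mpr fun _ => hlam
    | succ n ih =>
        rw [hVs n]
        exact ih.add_posSemidef (ep_vecMulVec_psd (x n))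
  have hu0 : ∀ t, 0 ≤ u t := by
    intro t
    have := ((hPD t).inv).posSemidef.dotProduct_mulVec_nonneg (x t)
    simpa [hu] using this
  have hdet : ∀ t, (V (t+1)).det = (V t).det * (1 + u t) := by
    intro t
    rw [hVs t]
    exact ep_det_step _ (hPD t) _
  have hdetT : ∀ n, (V n).det = lam ^ d * ∏ t ∈ Finset.range n, (1 + u t) := by
    intro n
    induction n with
    | zero => simp [hV0]
    | succ n ih => rw [Finset.prod_range_succ, hdet n, ih]; ring
  have htr : ∀ t, t ≤ T → (V t).trace ≤ d * lam + c * t := by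
    intro t
    induction t with
    | zero =>
        intro _
        rw [hV0, Matrix.trace_smul, Matrix.trace_one]
        simp [mul_comm]
    | succ n ih =>
        intro h
        have hnT : n < T := Nat.lt_of_succ_le h
        rw [hVs n, Matrix.trace_add]
        have h1 : (Matrix.vecMulVec (x n) (x n)).trace = ∑ i, (x n i)^2 := by
          simp [Matrix.trace, Matrix.vecMulVec_apply, Matrix.diag, sq]
        have h2 := hx n hnT
        have h3 := ih hnT.le
        rw [h1]
        push_cast
        linarith
  have hcT : 0 ≤ c * T := by
    rcases Nat.eq_zero_or_pos T with h | h
    · simp [h]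
    · have h0 : (0:ℝ) ≤ ∑ i, (x 0 i)^2 := by positivity
      have hc : 0 ≤ c := le_trans h0 (hx 0 h)
      positivity
  have hdlt : (0:ℝ) < lam + c*T/d :=
    add_pos_of_pos_of_nonneg hlam (div_nonneg hcT hdR.le)
  have hdet_le : (V T).det ≤ (lam + c*T/d)^d := by
    calc (V T).det ≤ ((V T).trace / d)^d := ep_det_le_pow hd' _ (hPD T)
      _ ≤ (lam + c*T/d)^d := by
          refine pow_le_pow_left₀ ?_ ?_ d
          · have h0 : (0:ℝ) ≤ (V T).trace := by
              rw [ep_trace_eq_sum_eigenvalues _ (hPD T).isHermitian]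
              exact Finset.sum_nonneg fun i _ => ((hPD T).eigenvalues_pos i).le
            positivity
          · rw [div_le_iff₀ hdR]
            have := htr T le_rfl
            have : (lam + c*T/d) * d = d * lam + c * T := by field_simp
            linarith [htr T le_rfl]
  have hprodpos : (0:ℝ) < ∏ t ∈ Finset.range T, (1 + u t) :=
    Finset.prod_pos fun t _ => by linarith [hu0 t]
  have hlog1 : Real.log ((V T).det)
      = d * Real.log lam + ∑ t ∈ Finset.range T, Real.log (1 + u t) := by
    rw [hdetT T, Real.log_mul (pow_ne_zero _ hlam.ne') hprodpos.ne', Real.log_pow,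
      Real.log_prod (fun t _ => ne_of_gt (by linarith [hu0 t]))]
  have hlogle : Real.log ((V T).det) ≤ d * Real.log (lam + c*T/d) := by
    calc Real.log ((V T).det) ≤ Real.log ((lam + c*T/d)^d) :=
          Real.log_le_log (hPD T).det_pos hdet_le
      _ = d * Real.log (lam + c*T/d) := Real.log_pow (lam + c*T/d) d
  have hkey : Real.log (lam + c*T/d) - Real.log lam = Real.log (1 + c*T/(d*lam)) := by
    rw [← Real.log_div hdlt.ne' hlam.ne']
    congr 1
    field_simp
  calc ∑ t ∈ Finset.range T, u t
      ≤ ∑ t ∈ Finset.range T, 2 * Real.log (1 + u t) :=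
        Finset.sum_le_sum fun t ht =>
          ep_aux_log (hu0 t) (hmah t (Finset.mem_range.mp ht))
    _ = 2 * ∑ t ∈ Finset.range T, Real.log (1 + u t) := by rw [Finset.mul_sum]
    _ = 2 * (Real.log ((V T).det) - d * Real.log lam) := by rw [hlog1]; ring
    _ ≤ 2 * (d * Real.log (lam + c*T/d) - d * Real.log lam) := by linarith
    _ = 2 * d * Real.log (1 + c * T / (d * lam)) := by rw [← hkey]; ring
end

section
/- With M the |S|×|S| matrix defined by M_{s,s'} = √(P¹(s'|s,π¹(s))·P²(s'|s,π²(s)))·𝟙{π¹(s)=π²(s)}, and d₀ the initial state distribution (as a vector), the Bhattacharyya coefficient between the H-step trajectory distributions of deterministic policies π¹, π² under transition kernels P¹, P² equals Σ_s [M^H d₀]_s, i.e., H²(P^{π¹}_{P¹}, P^{π²}_{P²}) = 1 − 1^T M^H d₀. -/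
open Finset

/-- Probability of the trajectory `τ = (s₀,a₀,…,a_{H−1},s_H)` under the deterministic
policy `pol`, transition kernel `P`, and initial state distribution `d0`. -/
def dtrajProb {S A : Type*} [DecidableEq A] (H : ℕ)
    (d0 : S → ℝ) (pol : S → A) (P : S → A → S → ℝ)
    (τ : (Fin (H + 1) → S) × (Fin H → A)) : ℝ :=
  d0 (τ.1 0) *
    ∏ t : Fin H, ((if τ.2 t = pol (τ.1 t.castSucc) then (1 : ℝ) else 0) *
      P (τ.1 t.castSucc) (τ.2 t) (τ.1 t.succ))

lemma my_sqrt_prod {ι : Type*} [DecidableEq ι] (s : Finset ι) (f : ι → ℝ) (hf : ∀ i ∈ s, 0 ≤ f i) :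
    Real.sqrt (∏ i ∈ s, f i) = ∏ i ∈ s, Real.sqrt (f i) := by
  induction s using Finset.induction with
  | empty => simp
  | insert _ _ hx ih =>
    rename_i a s
    rw [Finset.prod_insert hx, Finset.prod_insert hx,
      Real.sqrt_mul (hf a (Finset.mem_insert_self a s)),
      ih (fun i hi => hf i (Finset.mem_insert_of_mem hi))]

lemma sumA {S A : Type*} [Fintype A] [DecidableEq A]
    (pol1 pol2 : S → A) (P1 P2 : S → A → S → ℝ)
    (M : Matrix S S ℝ)
    (hM : ∀ s s', M s s'
      = Real.sqrt (P1 s (pol1 s) s' * P2 s (pol2 s) s') *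
          (if pol1 s = pol2 s then 1 else 0))
    (s0 s1 : S) :
    ∑ a : A, Real.sqrt ((if a = pol1 s0 then (1:ℝ) else 0) * P1 s0 a s1 *
      ((if a = pol2 s0 then (1:ℝ) else 0) * P2 s0 a s1)) = M s0 s1 := by
  rw [hM]
  by_cases h : pol1 s0 = pol2 s0
  · rw [Finset.sum_eq_single (pol1 s0)]
    · simp [h]
    · intro a _ ha
      simp [ha]
    · simp
  · simp only [h, if_false, mul_zero]
    apply Finset.sum_eq_zero
    intro a _
    by_cases ha : a = pol1 s0
    · have : a ≠ pol2 s0 := ha ▸ h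
      simp [this]
    · simp [ha]

def trajEquiv (S A : Type*) (H : ℕ) :
    (((Fin (H + 1) → S) × (Fin H → A)) × (S × A)) ≃
      ((Fin (H + 1 + 1) → S) × (Fin (H + 1) → A)) where
  toFun p := (Fin.cons p.2.1 p.1.1, Fin.cons p.2.2 p.1.2)
  invFun τ := ((Fin.tail τ.1, Fin.tail τ.2), (τ.1 0, τ.2 0))
  left_inv p := by simp [Fin.tail_cons]
  right_inv τ := by simp [Fin.cons_self_tail]

lemma aux {S A : Type*} [Fintype S] [DecidableEq S] [Fintype A] [DecidableEq A]
    (pol1 pol2 : S → A) (P1 P2 : S → A → S → ℝ)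
    (hP10 : ∀ s a s', 0 ≤ P1 s a s') (hP20 : ∀ s a s', 0 ≤ P2 s a s')
    (M : Matrix S S ℝ)
    (hM : ∀ s s', M s s'
      = Real.sqrt (P1 s (pol1 s) s' * P2 s (pol2 s) s') *
          (if pol1 s = pol2 s then 1 else 0)) :
    ∀ (H : ℕ) (w : S → ℝ),
    ∑ τ : (Fin (H + 1) → S) × (Fin H → A),
      w (τ.1 0) * ∏ t : Fin H,
        Real.sqrt ((if τ.2 t = pol1 (τ.1 t.castSucc) then (1:ℝ) else 0) *
            P1 (τ.1 t.castSucc) (τ.2 t) (τ.1 t.succ) *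
          ((if τ.2 t = pol2 (τ.1 t.castSucc) then (1:ℝ) else 0) *
            P2 (τ.1 t.castSucc) (τ.2 t) (τ.1 t.succ)))
      = ∑ s, Matrix.vecMul w (M ^ H) s := by
  intro H
  induction H with
  | zero =>
    intro w
    simp [Fintype.sum_prod_type]
    exact Fintype.sum_equiv (Equiv.funUnique (Fin 1) S) _ _ (fun f => rfl)
  | succ H ih =>
    intro w
    rw [← Equiv.sum_comp (trajEquiv S A H), Fintype.sum_prod_type]
    have step1 : ∀ (τ' : (Fin (H + 1) → S) × (Fin H → A)) (q : S × A),
        (fun τ : (Fin (H + 1 + 1) → S) × (Fin (H + 1) → A) =>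
          w (τ.1 0) * ∏ t : Fin (H + 1),
            Real.sqrt ((if τ.2 t = pol1 (τ.1 t.castSucc) then (1:ℝ) else 0) *
                P1 (τ.1 t.castSucc) (τ.2 t) (τ.1 t.succ) *
              ((if τ.2 t = pol2 (τ.1 t.castSucc) then (1:ℝ) else 0) *
                P2 (τ.1 t.castSucc) (τ.2 t) (τ.1 t.succ)))) (trajEquiv S A H (τ', q))
        = (w q.1 * Real.sqrt ((if q.2 = pol1 q.1 then (1:ℝ) else 0) * P1 q.1 q.2 (τ'.1 0) *
            ((if q.2 = pol2 q.1 then (1:ℝ) else 0) * P2 q.1 q.2 (τ'.1 0)))) *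
          ∏ t : Fin H,
            Real.sqrt ((if τ'.2 t = pol1 (τ'.1 t.castSucc) then (1:ℝ) else 0) *
                P1 (τ'.1 t.castSucc) (τ'.2 t) (τ'.1 t.succ) *
              ((if τ'.2 t = pol2 (τ'.1 t.castSucc) then (1:ℝ) else 0) *
                P2 (τ'.1 t.castSucc) (τ'.2 t) (τ'.1 t.succ))) := by
      rintro ⟨σ, α⟩ ⟨s0, a0⟩
      have he : trajEquiv S A H ((σ, α), (s0, a0)) = (Fin.cons s0 σ, Fin.cons a0 α) := rfl
      dsimp only
      rw [he, Fin.prod_univ_succ]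
      simp only [Fin.cons_zero, Fin.cons_succ, Fin.castSucc_zero, Fin.succ_zero_eq_one,
        ← Fin.succ_castSucc, Fin.cons_one]
      ring
    calc ∑ τ' : (Fin (H + 1) → S) × (Fin H → A), ∑ q : S × A, _
        = ∑ τ' : (Fin (H + 1) → S) × (Fin H → A),
            Matrix.vecMul w M (τ'.1 0) * ∏ t : Fin H,
              Real.sqrt ((if τ'.2 t = pol1 (τ'.1 t.castSucc) then (1:ℝ) else 0) *
                  P1 (τ'.1 t.castSucc) (τ'.2 t) (τ'.1 t.succ) *
                ((if τ'.2 t = pol2 (τ'.1 t.castSucc) then (1:ℝ) else 0) *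
                  P2 (τ'.1 t.castSucc) (τ'.2 t) (τ'.1 t.succ))) := by
          refine Finset.sum_congr rfl fun τ' _ => ?_
          rw [Finset.sum_congr rfl fun q _ => step1 τ' q, ← Finset.sum_mul]
          congr 1
          rw [Fintype.sum_prod_type]
          have : Matrix.vecMul w M (τ'.1 0) = ∑ s0, w s0 * M s0 (τ'.1 0) := rfl
          rw [this]
          refine Finset.sum_congr rfl fun s0 _ => ?_
          rw [← sumA pol1 pol2 P1 P2 M hM s0 (τ'.1 0), Finset.mul_sum]
      _ = ∑ s, Matrix.vecMul w (M ^ (H + 1)) s := by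
          rw [ih (Matrix.vecMul w M)]
          refine Finset.sum_congr rfl fun s _ => ?_
          rw [pow_succ', ← Matrix.vecMul_vecMul]

/-- With `M_{s,s'} = √(P¹(s'|s,π¹(s)) P²(s'|s,π²(s))) 𝟙{π¹(s)=π²(s)}`
and `d₀` the initial state distribution, the squared Hellinger distance between the
`H`-step trajectory distributions of deterministic policies `π¹, π²` under kernels
`P¹, P²` equals `1 − 1ᵀ M^H d₀` (the Bhattacharyya coefficient being `Σ_s [M^H d₀]_s`,
with the paper's convention `(M X)(s') = Σ_s X(s) M_{s,s'}`, i.e. `d₀ᵀ M^H` here). -/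
theorem hellinger_eq_one_sub_matrix_power
    {S A : Type*} [Fintype S] [Fintype A] [DecidableEq S] [DecidableEq A]
    (H : ℕ) (d0 : S → ℝ) (pol1 pol2 : S → A) (P1 P2 : S → A → S → ℝ)
    (hd0 : ∀ s, 0 ≤ d0 s) (hd01 : ∑ s, d0 s = 1)
    (hP10 : ∀ s a s', 0 ≤ P1 s a s') (hP11 : ∀ s a, ∑ s', P1 s a s' = 1)
    (hP20 : ∀ s a s', 0 ≤ P2 s a s') (hP21 : ∀ s a, ∑ s', P2 s a s' = 1)
    (M : Matrix S S ℝ)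
    (hM : ∀ s s', M s s'
      = Real.sqrt (P1 s (pol1 s) s' * P2 s (pol2 s) s') *
          (if pol1 s = pol2 s then 1 else 0)) :
    1 - (∑ τ : (Fin (H + 1) → S) × (Fin H → A),
          Real.sqrt (dtrajProb H d0 pol1 P1 τ * dtrajProb H d0 pol2 P2 τ))
      = 1 - ∑ s, Matrix.vecMul d0 (M ^ H) s := by
  have key : ∀ τ : (Fin (H + 1) → S) × (Fin H → A),
      Real.sqrt (dtrajProb H d0 pol1 P1 τ * dtrajProb H d0 pol2 P2 τ)
      = d0 (τ.1 0) * ∏ t : Fin H,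
          Real.sqrt ((if τ.2 t = pol1 (τ.1 t.castSucc) then (1:ℝ) else 0) *
              P1 (τ.1 t.castSucc) (τ.2 t) (τ.1 t.succ) *
            ((if τ.2 t = pol2 (τ.1 t.castSucc) then (1:ℝ) else 0) *
              P2 (τ.1 t.castSucc) (τ.2 t) (τ.1 t.succ))) := by
    intro τ
    unfold dtrajProb
    rw [show d0 (τ.1 0) *
          (∏ t : Fin H, ((if τ.2 t = pol1 (τ.1 t.castSucc) then (1:ℝ) else 0) *
            P1 (τ.1 t.castSucc) (τ.2 t) (τ.1 t.succ))) *
        (d0 (τ.1 0) *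
          ∏ t : Fin H, ((if τ.2 t = pol2 (τ.1 t.castSucc) then (1:ℝ) else 0) *
            P2 (τ.1 t.castSucc) (τ.2 t) (τ.1 t.succ)))
        = (d0 (τ.1 0) * d0 (τ.1 0)) * ∏ t : Fin H,
            ((if τ.2 t = pol1 (τ.1 t.castSucc) then (1:ℝ) else 0) *
              P1 (τ.1 t.castSucc) (τ.2 t) (τ.1 t.succ) *
            ((if τ.2 t = pol2 (τ.1 t.castSucc) then (1:ℝ) else 0) *
              P2 (τ.1 t.castSucc) (τ.2 t) (τ.1 t.succ))) by
      rw [mul_mul_mul_comm]; congr 1; exact Finset.prod_mul_distrib.symm]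
    rw [Real.sqrt_mul (mul_self_nonneg _), Real.sqrt_mul_self (hd0 _),
      my_sqrt_prod]
    intro t _
    refine mul_nonneg (mul_nonneg ?_ (hP10 _ _ _)) (mul_nonneg ?_ (hP20 _ _ _)) <;>
      · split <;> norm_num
  rw [Finset.sum_congr rfl fun τ _ => key τ,
    aux pol1 pol2 P1 P2 hP10 hP20 M hM H d0]
end
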